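/- The number of parking functions of length n is (n+1)^{n-1}. -/

import Mathlib

/-- Sequential parking process on a street with `m` spots: given the list of
preferences of the cars (in arrival order) and the set of already occupied
spots, return the list of spots in which the cars park (in arrival order),
or `none` if some car fails to park. Car with preference `a` parks in the
first unoccupied spot `j` with `a ≤ j ≤ m`. -/
def park (m : ℕ) : List ℕ → Finset ℕ → Option (List ℕ)
  | [], _ => some []
  | a :: as, occ =>
    match ((List.range' a (m + 1 - a)).filter fun j => decide (j ∉ occ)).head? with
    | none => none
    | some p => (park m as (insert p occ)).map (p :: ·)

/-- `α` is an `(n, m)`-parking function: `n` cars with preferences in `[m]`,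
all of which park successfully. -/
def IsPF (n m : ℕ) (α : List ℕ) : Prop :=
  α.length = n ∧ (∀ a ∈ α, 1 ≤ a ∧ a ≤ m) ∧ (park m α ∅).isSome

/-- Total displacement: the sum over cars of (parking spot − preference). -/
def disp (m : ℕ) (α : List ℕ) : ℕ :=
  match park m α ∅ with
  | some ps => ((ps.zip α).map fun x => x.1 - x.2).sum
  | none => 0

/-- The set of spots occupied at the end of the parking process. -/
def occSet (m : ℕ) (α : List ℕ) : Finset ℕ :=
  match park m α ∅ with
  | some ps => ps.toFinset
  | none => ∅

/-- The characteristic function of the parking game of `α`: the total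
displacement of the sub-tuple of preferences indexed by the coalition `S`,
parked on a street with `n` spots. -/
def gameCost (n : ℕ) (α : Fin n → ℕ) (S : Finset (Fin n)) : ℕ :=
  disp n ((S.sort (· ≤ ·)).map α)

/-- The Shapley value of a coalitional cost game `c` on players `Fin n`. -/
noncomputable def shapley (n : ℕ) (c : Finset (Fin n) → ℕ) (i : Fin n) : ℚ :=
  (1 / (n.factorial : ℚ)) * ∑ π : Equiv.Perm (Fin n),
    ((c (Finset.univ.filter fun j => π j ≤ π i) : ℚ) -
     (c (Finset.univ.filter fun j => π j < π i) : ℚ))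

/-!
Pollak's circular argument. Reading preferences modulo `n + 1` puts the `n` cars on a
circular street of `n + 1` spots. A tuple parks on the linear street iff for every `b`
at most `n + 1 - b` cars prefer a spot `≥ b`; after cutting the circle just before a spot `c`
this says that the partial sums, starting at `c`, of `(number of cars preferring v) - 1`
are nonnegative. These `n + 1` numbers sum to `-1`, so by the cycle lemma exactly one cut
point `c` works. Hence parking functions × `ZMod (n + 1)` ≃ `(ZMod (n + 1))ⁿ`, and
`(n + 1) · #PF = (n + 1)ⁿ`.
-/

open Finset

lemma park_cons (m a : ℕ) (as : List ℕ) (occ : Finset ℕ) :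
    park m (a :: as) occ = ((List.range' a (m + 1 - a)).find? (· ∉ occ)).bind
      fun p => (park m as (insert p occ)).map (p :: ·) := by
  rw [park, List.head?_filter]
  cases (List.range' a (m + 1 - a)).find? (· ∉ occ) <;> rfl

lemma card_insert_inter_Icc {occ : Finset ℕ} {p b m : ℕ} (hp : p ∉ occ) (hbp : b ≤ p)
    (hpm : p ≤ m) : #(insert p occ ∩ Icc b m) = #(occ ∩ Icc b m) + 1 := by
  rw [insert_inter_of_mem (mem_Icc.2 ⟨hbp, hpm⟩),
    card_insert_of_notMem fun h => hp (mem_inter.1 h).1]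

-- `#(occ ∩ Icc b m) + α.countP (b ≤ ·)` counts the claims on the spots `b, …, m`: those
-- already occupied, and one for each car that prefers a spot `≥ b`.
lemma card_inter_Icc_add_countP_le_of_isSome_park {m : ℕ} (b : ℕ) :
    ∀ {α : List ℕ} {occ : Finset ℕ}, (park m α occ).isSome →
      #(occ ∩ Icc b m) + α.countP (b ≤ ·) ≤ m + 1 - b
  | [], occ, _ => by simpa using card_le_card (inter_subset_right (s₁ := occ) (s₂ := Icc b m))
  | a :: as, occ, h => by
    rcases hp : (List.range' a (m + 1 - a)).find? (· ∉ occ) with _ | p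
    · rw [park_cons, hp] at h
      simp at h
    rw [park_cons, hp, Option.bind_some, Option.isSome_map] at h
    obtain ⟨hpocc, hpmem, -⟩ := List.find?_range'_eq_some.1 hp
    simp only [decide_eq_true_eq, List.mem_range'_1] at hpocc hpmem
    have ih := card_inter_Icc_add_countP_le_of_isSome_park b h
    rw [List.countP_cons]
    by_cases hba : b ≤ a
    · rw [card_insert_inter_Icc hpocc (by omega) (by omega)] at ih
      simp only [hba, decide_true, if_true]
      omega
    · have := card_le_card (inter_subset_inter_right (subset_insert p occ) (u := Icc b m))
      simp only [hba, decide_false, Bool.false_eq_true, if_false]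
      omega

lemma exists_lt_card_inter_Icc_add_countP_of_park_eq_none {m : ℕ} :
    ∀ {α : List ℕ} {occ : Finset ℕ}, park m α occ = none →
      ∃ b, (b = 0 ∨ b - 1 ∉ occ) ∧ m + 1 - b < #(occ ∩ Icc b m) + α.countP (b ≤ ·)
  | [], occ, h => by simp [park] at h
  | a :: as, occ, h => by
    rcases hp : (List.range' a (m + 1 - a)).find? (· ∉ occ) with _ | p
    · have hall : ∀ j, a ≤ j → j ≤ m → j ∈ occ := fun j hj hjm => by
        simpa using List.find?_range'_eq_none.1 hp j hj (by omega)
      have hfull : ∃ b, ∀ j, b ≤ j → j ≤ m → j ∈ occ := ⟨a, hall⟩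
      have hba : Nat.find hfull ≤ a := Nat.find_min' hfull hall
      refine ⟨Nat.find hfull, ?_, ?_⟩
      · by_contra! hb
        refine Nat.find_min hfull (m := Nat.find hfull - 1) (by omega) fun j hj hjm => ?_
        rcases hj.eq_or_lt with rfl | hj
        · exact hb.2
        · exact Nat.find_spec hfull j (by omega) hjm
      · rw [inter_eq_right.2 fun j hj => Nat.find_spec hfull j (mem_Icc.1 hj).1 (mem_Icc.1 hj).2,
          Nat.card_Icc, List.countP_cons]
        simp only [hba, decide_true, if_true]
        omega
    · rw [park_cons, hp, Option.bind_some, Option.map_eq_none_iff] at h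
      obtain ⟨hpocc, hpmem, hskip⟩ := List.find?_range'_eq_some.1 hp
      simp only [decide_eq_true_eq, List.mem_range'_1, Bool.not_eq_eq_eq_not, Bool.not_true,
        decide_eq_false_iff_not, not_not] at hpocc hpmem hskip
      obtain ⟨b, hfree, hover⟩ := exists_lt_card_inter_Icc_add_countP_of_park_eq_none h
      refine ⟨b, hfree.imp_right fun hb hb' => hb (mem_insert_of_mem hb'), ?_⟩
      rw [List.countP_cons]
      by_cases hba : b ≤ a
      · rw [card_insert_inter_Icc hpocc (by omega) (by omega)] at hover
        simp only [hba, decide_true, if_true]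
        omega
      · -- the car preferring `a < b` would have taken the free spot `b - 1` before reaching `b`
        have hpb : p < b := by
          by_contra hpb
          refine hfree.elim (by omega) fun hb => hb (mem_insert_of_mem ?_)
          exact hskip (b - 1) (by omega) (by omega)
        rw [insert_inter_of_notMem (fun h => by simp at h; omega)] at hover
        simp only [hba, decide_false, Bool.false_eq_true, if_false]
        omega

theorem isSome_park_empty_iff (m : ℕ) (α : List ℕ) :
    (park m α ∅).isSome ↔ ∀ b, α.countP (b ≤ ·) ≤ m + 1 - b := by
  refine ⟨fun h b => by simpa using card_inter_Icc_add_countP_le_of_isSome_park b h, fun h => ?_⟩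
  rw [Option.isSome_iff_ne_none]
  intro hnone
  obtain ⟨b, -, hb⟩ := exists_lt_card_inter_Icc_add_countP_of_park_eq_none hnone
  simp only [empty_inter, card_empty, zero_add] at hb
  exact (h b).not_gt hb

theorem isPF_iff {n m : ℕ} {α : List ℕ} :
    IsPF n m α ↔ α.length = n ∧ (∀ a ∈ α, 1 ≤ a) ∧ ∀ b, α.countP (b ≤ ·) ≤ m + 1 - b := by
  rw [IsPF, isSome_park_empty_iff]
  refine and_congr_right fun _ => ⟨fun h => ⟨fun a ha => (h.1 a ha).1, h.2⟩,
    fun h => ⟨fun a ha => ⟨h.1 a ha, ?_⟩, h.2⟩⟩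
  have := h.2 (m + 1)
  simp only [tsub_self, nonpos_iff_eq_zero, List.countP_eq_zero, decide_eq_true_eq, not_le] at this
  exact Nat.lt_succ_iff.1 (this a ha)

section CycleLemma

variable {n : ℕ} (d : ZMod (n + 1) → ℤ)

def cycleSum (c : ZMod (n + 1)) (k : ℕ) : ℤ :=
  ∑ j ∈ range k, d (c + j)

def PartialSumsNonneg (c : ZMod (n + 1)) : Prop :=
  ∀ k ≤ n, 0 ≤ cycleSum d c k

lemma cycleSum_add (c : ZMod (n + 1)) (k l : ℕ) :
    cycleSum d c (k + l) = cycleSum d c k + cycleSum d (c + k) l := by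
  simp only [cycleSum, sum_range_add, Nat.cast_add, add_assoc]

lemma cycleSum_self (c : ZMod (n + 1)) : cycleSum d c (n + 1) = ∑ v, d v := by
  rw [cycleSum, ← Fin.sum_univ_eq_sum_range (fun j => d (c + j))]
  exact Fintype.sum_equiv (Equiv.addLeft c) _ _ fun j => by
    rw [Equiv.coe_addLeft]; exact congrArg (d <| c + ·) (ZMod.natCast_zmod_val j)

variable {d}

lemma PartialSumsNonneg.eq (hsum : ∑ v, d v < 0) {c c' : ZMod (n + 1)}
    (hc : PartialSumsNonneg d c) (hc' : PartialSumsNonneg d c') : c = c' := by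
  by_contra hne
  set k := (c' - c).val
  have hkn : k ≤ n := Nat.lt_succ_iff.1 (ZMod.val_lt _)
  have hk0 : k ≠ 0 := fun h => hne (sub_eq_zero.1 ((ZMod.val_eq_zero _).1 h)).symm
  have hck : c + k = c' := by simp [k]
  have := cycleSum_add d c k (n + 1 - k)
  rw [Nat.add_sub_cancel' (by omega), cycleSum_self, hck] at this
  linarith [hc k hkn, hc' (n + 1 - k) (by omega)]

lemma exists_partialSumsNonneg (hsum : ∑ v, d v = -1) : ∃ c, PartialSumsNonneg d c := by
  set t := cycleSum d 0 with ht
  have ht_period : ∀ j, t (j + (n + 1)) = t j - 1 := fun j => by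
    rw [ht, cycleSum_add, cycleSum_self, hsum, sub_eq_add_neg]
  obtain ⟨s₀, hs₀n, hmin⟩ := exists_min_image (range (n + 1)) t nonempty_range_add_one
  obtain ⟨s, hs, hs_first⟩ : ∃ s, t s = t s₀ ∧ ∀ j < s, t j ≠ t s₀ :=
    have hex : ∃ s, t s = t s₀ := ⟨s₀, rfl⟩
    ⟨Nat.find hex, Nat.find_spec hex, fun _ => Nat.find_min hex⟩
  have hs₀ : s ≤ s₀ := not_lt.1 fun h => hs_first s₀ h rfl
  rw [mem_range] at hs₀n
  refine ⟨s, fun k hk => ?_⟩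
  have hshift : cycleSum d s k = t (s + k) - t s := by
    rw [ht, cycleSum_add, zero_add, add_sub_cancel_left]
  rw [hshift, sub_nonneg, hs]
  rcases le_or_gt (s + k) n with h | h
  · exact hmin _ (mem_range.2 (by omega))
  · obtain ⟨j, hj⟩ : ∃ j, s + k = j + (n + 1) := ⟨s + k - (n + 1), by omega⟩
    have := (hmin j (mem_range.2 (by omega))).lt_of_ne' (hs_first j (by omega))
    rw [hj, ht_period]
    omega

end CycleLemma

lemma List.countP_ofFn {n : ℕ} {β : Type*} (p : β → Bool) (f : Fin n → β) :
    (List.ofFn f).countP p = #{i | p (f i)} := by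
  rw [List.ofFn_eq_map, List.countP_map, List.countP_eq_length_filter,
    ← List.toFinset_card_of_nodup ((List.nodup_finRange n).filter _),
    List.toFinset_filter, List.toFinset_finRange]
  rfl

theorem isPF_ofFn_iff {n : ℕ} {α : Fin n → ℕ} :
    IsPF n n (List.ofFn α) ↔ (∀ i, 1 ≤ α i) ∧ ∀ k ≤ n, k ≤ #{i | α i ≤ k} := by
  have hsplit : ∀ k, #{i | k + 1 ≤ α i} + #{i | α i ≤ k} = n := fun k => by
    simpa [not_le, Nat.lt_succ_iff] using
      card_filter_add_card_filter_not (s := univ) (fun i => k + 1 ≤ α i)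
  simp only [isPF_iff, List.length_ofFn, List.mem_ofFn, forall_exists_index,
    forall_apply_eq_imp_iff, List.countP_ofFn, decide_eq_true_eq, true_and]
  refine and_congr_right fun _ => ⟨fun h k hk => ?_, fun h b => ?_⟩
  · have := h (k + 1); have := hsplit k; omega
  · rcases b with _ | k
    · exact (card_filter_le _ _).trans (by simp)
    · have hmono : #{i | k + 1 ≤ α i} ≤ #{i | min k n + 1 ≤ α i} :=
        card_le_card fun i => by simp only [mem_filter_univ]; omega
      have := h (min k n) (min_le_right _ _)
      have := hsplit (min k n)
      omega

section Rotation

variable {n : ℕ}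

-- A preference `a ∈ [1, n + 1]` is read as the spot `c + (a - 1)` of a circular street with
-- `n + 1` spots, i.e. the linear street is obtained by cutting the circle just before `c`.
def wrap (α : Fin n → ℕ) (c : ZMod (n + 1)) : Fin n → ZMod (n + 1) :=
  fun i => ((α i - 1 : ℕ) : ZMod (n + 1)) + c

def unwrap (β : Fin n → ZMod (n + 1)) (c : ZMod (n + 1)) : Fin n → ℕ :=
  fun i => (β i - c).val + 1

lemma unwrap_wrap {α : Fin n → ℕ} (hα : ∀ i, 1 ≤ α i ∧ α i ≤ n) (c : ZMod (n + 1)) :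
    unwrap (wrap α c) c = α := by
  funext i
  obtain ⟨h1, hn⟩ := hα i
  rw [unwrap, wrap, add_sub_cancel_right, ZMod.val_cast_of_lt (by omega)]
  omega

lemma wrap_unwrap (β : Fin n → ZMod (n + 1)) (c : ZMod (n + 1)) : wrap (unwrap β c) c = β := by
  funext i
  simp [wrap, unwrap]

def excess (β : Fin n → ZMod (n + 1)) (v : ZMod (n + 1)) : ℤ :=
  #{i | β i = v} - 1

lemma sum_excess (β : Fin n → ZMod (n + 1)) : ∑ v, excess β v = -1 := by
  have := card_eq_sum_card_fiberwise (f := β) (s := univ) (t := univ) fun i _ => mem_univ _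
  simp only [card_univ, Fintype.card_fin] at this
  simp [excess, sum_sub_distrib, this]

lemma card_unwrap_le (β : Fin n → ZMod (n + 1)) (c : ZMod (n + 1)) {k : ℕ} (hk : k ≤ n + 1) :
    #{i | unwrap β c i ≤ k} = ∑ j ∈ range k, #{i | β i = c + j} := by
  have hfiber : ∀ j ∈ range k, #{i | β i = c + j} = #{i | (β i - c).val = j} := fun j hj => by
    congr 1
    ext i
    rw [mem_filter_univ, mem_filter_univ, ← sub_eq_iff_eq_add']
    have hjn : j < n + 1 := by rw [mem_range] at hj; omega
    exact ⟨fun h => by rw [h, ZMod.val_cast_of_lt hjn], fun h => by rw [← h, ZMod.natCast_zmod_val]⟩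
  rw [sum_congr rfl hfiber, sum_card_fiberwise_eq_card_filter]
  congr 1
  ext i
  simp [unwrap]

lemma isPF_unwrap_iff (β : Fin n → ZMod (n + 1)) (c : ZMod (n + 1)) :
    IsPF n n (List.ofFn (unwrap β c)) ↔ PartialSumsNonneg (excess β) c := by
  have hpos : ∀ i, 1 ≤ unwrap β c i := fun i => Nat.le_add_left 1 _
  simp only [isPF_ofFn_iff, hpos, implies_true, true_and, PartialSumsNonneg, cycleSum, excess]
  refine forall₂_congr fun k hk => ?_
  rw [card_unwrap_le β c (by omega), sum_sub_distrib, sum_const, card_range, nsmul_one,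
    sub_nonneg]
  norm_cast

lemma IsPF.unwrap_wrap {α : Fin n → ℕ} (hα : IsPF n n (List.ofFn α)) (c : ZMod (n + 1)) :
    unwrap (wrap α c) c = α :=
  _root_.unwrap_wrap (fun i => hα.2.1 (α i) (by simp)) c

lemma IsPF.partialSumsNonneg_wrap {α : Fin n → ℕ} (hα : IsPF n n (List.ofFn α))
    (c : ZMod (n + 1)) : PartialSumsNonneg (excess (wrap α c)) c := by
  rw [← isPF_unwrap_iff, hα.unwrap_wrap c]
  exact hα

end Rotation

noncomputable def parkingFunctionProdEquiv (n : ℕ) :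
    {α : Fin n → ℕ // IsPF n n (List.ofFn α)} × ZMod (n + 1) ≃ (Fin n → ZMod (n + 1)) :=
  Equiv.ofBijective (fun x => wrap x.1.1 x.2) <| by
    refine ⟨?_, fun β => ?_⟩
    · rintro ⟨⟨α, hα⟩, c⟩ ⟨⟨α', hα'⟩, c'⟩ (h : wrap α c = wrap α' c')
      have hc : c = c' := (hα.partialSumsNonneg_wrap c).eq (by simp [sum_excess])
        (h ▸ hα'.partialSumsNonneg_wrap c')
      subst hc
      have hαα' : α = α' := by rw [← hα.unwrap_wrap c, ← hα'.unwrap_wrap c, h]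
      simp [hαα']
    · obtain ⟨c, hc⟩ := exists_partialSumsNonneg (sum_excess β)
      exact ⟨(⟨unwrap β c, (isPF_unwrap_iff β c).2 hc⟩, c), wrap_unwrap β c⟩

/-- the number of parking functions of length `n` is `(n+1)^(n-1)`. -/
theorem stmt2 (n : ℕ) :
    Nat.card {α : Fin n → ℕ // IsPF n n (List.ofFn α)} = (n + 1) ^ (n - 1) := by
  have h := Nat.card_congr (parkingFunctionProdEquiv n)
  simp only [Nat.card_prod, Nat.card_eq_fintype_card, ZMod.card, Fintype.card_fun,
    Fintype.card_fin] at h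
  refine Nat.eq_of_mul_eq_mul_right n.succ_pos (h.trans ?_)
  cases n <;> simp [pow_succ]
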